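/- arXiv:2103.10060 — 4 statements merged into one kernel-verified Lean document; each statement's English description precedes it below -/
import Mathlib

section
/- There exist universal constants C > 0 and C' > 0 such that for every integer d ≥ 2 there are thresholds W₀ and D₀ (depending only on d) with the following property: for every M̃ > 0, every function f : ℝ^d → ℝ that is 1-Lipschitz on the cube [−M̃, M̃]^d, every even integer W ≥ W₀ and every integer D ≥ D₀, there exists a GroupSort network f̃ : ℝ^d → ℝ of width W and depth D (grouping size 2) such that sup_{x ∈ [−M̃, M̃]^d} |f(x) − f̃(x)| ≤ C' · M̃ · √d · max( 2^{−D/(C d²)}, W^{−1/d²} ). -/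
open MeasureTheory
open scoped ENNReal NNReal BigOperators

noncomputable section

abbrev Euc (k : ℕ) := EuclideanSpace ℝ (Fin k)

/-- The GroupSort activation with grouping size 2 on ℝ^{2k}: each consecutive pair
of coordinates is replaced by (their max, their min). -/
noncomputable def gsAct {k : ℕ} (x : Euc (2 * k)) : Euc (2 * k) :=
  WithLp.toLp 2 fun j =>
    if _h : j.val % 2 = 0 then
      max (x j) (x ⟨j.val + 1, by have := j.isLt; omega⟩)
    else
      min (x ⟨j.val - 1, by have := j.isLt; omega⟩) (x j)

/-- Hidden stack of a GroupSort network from ℝ^d of width `2k` (no norm constraints):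
composition of `h` blocks σ₂∘(affine). -/
inductive IsGSStack (d k : ℕ) : ℕ → (Euc d → Euc (2 * k)) → Prop
  | base (V : Euc d →L[ℝ] Euc (2 * k)) (c : Euc (2 * k)) :
      IsGSStack d k 1 (fun x => gsAct (V x + c))
  | step (h : ℕ) (φ : Euc d → Euc (2 * k))
      (V : Euc (2 * k) →L[ℝ] Euc (2 * k)) (c : Euc (2 * k))
      (hφ : IsGSStack d k h φ) :
      IsGSStack d k (h + 1) (fun x => gsAct (V (φ x) + c))

/-- `f` is a GroupSort network (grouping size 2) from ℝ^d to ℝ of width `2k`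
and depth `D`. -/
def IsGSNet (d k : ℕ) (D : ℕ) (f : Euc d → ℝ) : Prop :=
  (D = 1 ∧ ∃ (V : Euc d →L[ℝ] ℝ) (c : ℝ), f = fun x => V x + c) ∨
  (2 ≤ D ∧ ∃ φ : Euc d → Euc (2 * k), IsGSStack d k (D - 1) φ ∧
      ∃ (V : Euc (2 * k) →L[ℝ] ℝ) (c : ℝ), f = fun x => V (φ x) + c)

/-!
Sample `f` at the centres `p m` of a grid of `N ^ d` congruent subcubes and take
`f̃ x = max_m (f (p m) - ‖x - p m‖₁)`. As `‖·‖₂ ≤ ‖·‖₁`, every term is at most `f x`, and the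
centre of the subcube containing `x` gives a term at least `f x - 2 d M̃ / N`.
One GroupSort layer of width `2 N ^ d d` computes all `|x i - p m i| = max (t, -t)`, and a binary
tree of pairwise maxima of depth `⌈log₂ N ^ d⌉` computes the maximum. Taking
`N ≈ d · min (2 ^ (D / d²)) (W ^ (1 / d²))` fits both the width and the depth budget.
-/

open Finset

def EuclideanSpace.ofRows {E : Type*} [NormedAddCommGroup E] [NormedSpace ℝ E] {n : ℕ}
    (V : Fin n → E →L[ℝ] ℝ) : E →L[ℝ] Euc n :=
  (EuclideanSpace.equiv (Fin n) ℝ).symm.toContinuousLinearMap ∘L ContinuousLinearMap.pi V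

@[simp]
lemma EuclideanSpace.ofRows_apply {E : Type*} [NormedAddCommGroup E] [NormedSpace ℝ E] {n : ℕ}
    (V : Fin n → E →L[ℝ] ℝ) (x : E) (j : Fin n) : EuclideanSpace.ofRows V x j = V j x :=
  rfl

lemma EuclideanSpace.norm_le_sum_abs {ι : Type*} [Fintype ι] (x : EuclideanSpace ℝ ι) :
    ‖x‖ ≤ ∑ i, |x i| := by
  rw [EuclideanSpace.norm_eq, ← Real.sqrt_sq (sum_nonneg fun i _ => abs_nonneg (x i))]
  exact Real.sqrt_le_sqrt (by simpa using sum_sq_le_sq_sum_of_nonneg fun i _ => abs_nonneg (x i))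

lemma Finset.sup'_univ_sup_comp_eq {ι κ α : Type*} [Fintype ι] [Fintype κ] [Nonempty ι]
    [Nonempty κ] [SemilatticeSup α] (g : ι → α) (σ τ : κ → ι)
    (hcover : ∀ i, ∃ t, σ t = i ∨ τ t = i) :
    univ.sup' univ_nonempty (fun t => g (σ t) ⊔ g (τ t)) = univ.sup' univ_nonempty g := by
  refine le_antisymm (sup'_le _ _ fun t _ => sup_le (le_sup' g (mem_univ _))
    (le_sup' g (mem_univ _))) (sup'_le _ _ fun i _ => ?_)
  obtain ⟨t, rfl | rfl⟩ := hcover i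
  · exact le_sup_left.trans (le_sup' (fun t => g (σ t) ⊔ g (τ t)) (mem_univ t))
  · exact le_sup_right.trans (le_sup' (fun t => g (σ t) ⊔ g (τ t)) (mem_univ t))

lemma gsAct_apply_two_mul {k : ℕ} (y : Euc (2 * k)) (j : Fin k) :
    gsAct y ⟨2 * j, by omega⟩ = max (y ⟨2 * j, by omega⟩) (y ⟨2 * j + 1, by omega⟩) := by
  simp [gsAct]

def IsGSFamily (d k h : ℕ) {ι : Type*} (g : ι → Euc d → ℝ) : Prop :=
  ∃ φ, IsGSStack d k h φ ∧ ∃ (V : ι → Euc (2 * k) →L[ℝ] ℝ) (c : ι → ℝ),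
    ∀ i x, V i (φ x) + c i = g i x

namespace IsGSFamily

variable {d k h : ℕ} {ι κ : Type*} {g : ι → Euc d → ℝ}

lemma comp (hg : IsGSFamily d k h g) (σ : κ → ι) : IsGSFamily d k h fun j => g (σ j) := by
  obtain ⟨φ, hφ, V, c, hV⟩ := hg
  exact ⟨φ, hφ, fun j => V (σ j), fun j => c (σ j), fun j => hV (σ j)⟩

lemma sum_mul_add [Fintype ι] (hg : IsGSFamily d k h g) (w : κ → ι → ℝ) (b : κ → ℝ) :
    IsGSFamily d k h fun j x => ∑ i, w j i * g i x + b j := by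
  obtain ⟨φ, hφ, V, c, hV⟩ := hg
  refine ⟨φ, hφ, fun j => ∑ i, w j i • V i, fun j => ∑ i, w j i * c i + b j, fun j x => ?_⟩
  simp [← hV, mul_add, Finset.sum_add_distrib, add_assoc]

lemma max_pairs {g : Fin (2 * k) → Euc d → ℝ} (hg : IsGSFamily d k h g) :
    IsGSFamily d k (h + 1) fun (j : Fin k) x =>
      max (g ⟨2 * j, by omega⟩ x) (g ⟨2 * j + 1, by omega⟩ x) := by
  obtain ⟨φ, hφ, V, c, hV⟩ := hg
  exact ⟨_, .step h φ (EuclideanSpace.ofRows V) (WithLp.toLp 2 c) hφ,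
    fun j => EuclideanSpace.proj ⟨2 * j, by omega⟩, 0, fun j x => by simp [gsAct_apply_two_mul, hV]⟩

lemma sup' {M : ℕ} [NeZero M] {g : Fin M → Euc d → ℝ} (hg : IsGSFamily d k h g)
    (hMk : M ≤ 2 * k) (s : ℕ) (hMs : M ≤ 2 ^ s) :
    IsGSFamily d k (h + s) fun (_ : Unit) x => univ.sup' univ_nonempty (g · x) := by
  have hM := NeZero.pos M
  induction s generalizing M h with
  | zero =>
    obtain rfl : M = 1 := by simp at hMs; omega
    simpa using hg.comp fun _ => 0
  | succ s ih =>
    -- `clamp` repeats the last member, so an odd family pairs it with itself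
    let clamp : Fin (2 * k) → Fin M := fun j => ⟨min j (M - 1), by omega⟩
    have : NeZero ((M + 1) / 2) := ⟨by omega⟩
    have hpairs := (hg.comp clamp).max_pairs.comp (Fin.castLE (show (M + 1) / 2 ≤ k by omega))
    have hcover : ∀ m : Fin M, ∃ t : Fin ((M + 1) / 2),
        clamp ⟨2 * t, by omega⟩ = m ∨ clamp ⟨2 * t + 1, by omega⟩ = m := by
      intro m
      refine ⟨⟨m / 2, by omega⟩, ?_⟩
      simp only [clamp, Fin.ext_iff]
      omega
    rw [show h + (s + 1) = h + 1 + s by omega]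
    convert ih hpairs (by omega) (by rw [pow_succ] at hMs; omega) (by omega) using 3 with _ x
    exact (Finset.sup'_univ_sup_comp_eq (g · x) _ _ hcover).symm

lemma isGSNet {D : ℕ} {F : Euc d → ℝ} (hF : IsGSFamily d k (D - 1) fun (_ : Unit) => F)
    (hD : 2 ≤ D) : IsGSNet d k D F := by
  obtain ⟨φ, hφ, V, c, hV⟩ := hF
  exact Or.inr ⟨hD, φ, hφ, V (), c (), funext fun x => (hV () x).symm⟩

end IsGSFamily

lemma isGSFamily_one_max_pairs {d k : ℕ} (ℓ : Fin (2 * k) → Euc d →L[ℝ] ℝ)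
    (a : Fin (2 * k) → ℝ) :
    IsGSFamily d k 1 fun (j : Fin k) x =>
      max (ℓ ⟨2 * j, by omega⟩ x + a ⟨2 * j, by omega⟩)
        (ℓ ⟨2 * j + 1, by omega⟩ x + a ⟨2 * j + 1, by omega⟩) :=
  ⟨_, .base (EuclideanSpace.ofRows ℓ) (WithLp.toLp 2 a),
    fun j => EuclideanSpace.proj ⟨2 * j, by omega⟩, 0, fun j x => by simp [gsAct_apply_two_mul]⟩

lemma isGSFamily_abs_fin {d k : ℕ} (ℓ : Fin k → Euc d →L[ℝ] ℝ) (a : Fin k → ℝ) :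
    IsGSFamily d k 1 fun j x => |ℓ j x + a j| := by
  -- rows `2 j` and `2 j + 1` carry `±(ℓ j x + a j)`, whose maximum is the absolute value
  convert isGSFamily_one_max_pairs
    (fun j : Fin (2 * k) => (-1 : ℝ) ^ (j : ℕ) • ℓ ⟨j / 2, by have := j.2; omega⟩)
    (fun j : Fin (2 * k) => (-1) ^ (j : ℕ) * a ⟨j / 2, by have := j.2; omega⟩) using 1
  funext j x
  have h₀ : (⟨2 * j / 2, by omega⟩ : Fin k) = j := Fin.ext (by simp)
  have h₁ : (⟨(2 * j + 1) / 2, by omega⟩ : Fin k) = j := Fin.ext (by simp; omega)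
  have s₀ : (-1 : ℝ) ^ (2 * j : ℕ) = 1 := by simp [pow_mul]
  have s₁ : (-1 : ℝ) ^ (2 * j + 1 : ℕ) = -1 := by simp [pow_succ, pow_mul]
  simp only [h₀, h₁, s₀, s₁]
  simp [abs_eq_max_neg, add_comm]

lemma isGSFamily_abs {d k : ℕ} {ι : Type*} (e : ι ↪ Fin k) (ℓ : ι → Euc d →L[ℝ] ℝ) (a : ι → ℝ) :
    IsGSFamily d k 1 fun i x => |ℓ i x + a i| := by
  simpa [e.injective.extend_apply] using
    (isGSFamily_abs_fin (Function.extend e ℓ 0) (Function.extend e a 0)).comp e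

lemma isGSFamily_sub_sum_abs {d k M : ℕ} (hMd : M * d ≤ k) (p : Fin M → Euc d) (b : Fin M → ℝ) :
    IsGSFamily d k 1 fun m x => b m - ∑ i, |x i - p m i| := by
  have habs := isGSFamily_abs (finProdFinEquiv.toEmbedding.trans (Fin.castLEEmb hMd))
    (fun e : Fin M × Fin d => EuclideanSpace.proj e.2) (fun e => -p e.1 e.2)
  convert habs.sum_mul_add (fun m e => if e.1 = m then -1 else 0) b using 1
  funext m x
  simp [Fintype.sum_prod_type, sub_eq_add_neg, add_comm]

theorem isGSNet_sup'_sub_sum_abs {d k D M : ℕ} [NeZero M] (hd : 0 < d) (hMd : M * d ≤ k)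
    (hMD : M ≤ 2 ^ (D - 2)) (hD : 2 ≤ D) (p : Fin M → Euc d) (b : Fin M → ℝ) :
    IsGSNet d k D fun x => univ.sup' univ_nonempty fun m => b m - ∑ i, |x i - p m i| := by
  have := (isGSFamily_sub_sum_abs hMd p b).sup' (by nlinarith) (D - 2) hMD
  rw [show 1 + (D - 2) = D - 1 by omega] at this
  exact this.isGSNet hD

lemma abs_sub_sup'_le {d : ℕ} {S : Set (Euc d)} {f : Euc d → ℝ} (hf : LipschitzOnWith 1 f S)
    {ι : Type*} [Fintype ι] [Nonempty ι] {p : ι → Euc d} (hp : ∀ m, p m ∈ S) {x : Euc d}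
    (hx : x ∈ S) {δ : ℝ} (hδ : ∃ m, ∑ i, |x i - p m i| ≤ δ) :
    |f x - univ.sup' univ_nonempty (fun m => f (p m) - ∑ i, |x i - p m i|)| ≤ 2 * δ := by
  have hlip (m : ι) : |f x - f (p m)| ≤ ∑ i, |x i - p m i| :=
    calc |f x - f (p m)| ≤ ‖x - p m‖ := by
          simpa [Real.dist_eq, dist_eq_norm] using hf.dist_le_mul x hx (p m) (hp m)
      _ ≤ ∑ i, |x i - p m i| := by simpa using EuclideanSpace.norm_le_sum_abs (x - p m)
  have hupper : univ.sup' univ_nonempty (fun m => f (p m) - ∑ i, |x i - p m i|) ≤ f x :=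
    sup'_le _ _ fun m _ => by linarith [(abs_le.1 (hlip m)).1]
  obtain ⟨m₀, hm₀⟩ := hδ
  have hlower : f x - 2 * δ ≤ univ.sup' univ_nonempty (fun m => f (p m) - ∑ i, |x i - p m i|) :=
    le_sup'_of_le _ (mem_univ m₀) (by linarith [(abs_le.1 (hlip m₀)).2])
  rw [abs_le]
  constructor <;> linarith [sum_nonneg fun i (_ : i ∈ univ) => abs_nonneg (x i - p m₀ i)]

lemma exists_fin_le_le_add_one {N : ℕ} (hN : 0 < N) {u : ℝ} (hu₀ : 0 ≤ u) (huN : u ≤ N) :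
    ∃ n : Fin N, (n : ℝ) ≤ u ∧ u ≤ n + 1 := by
  by_cases h : ⌊u⌋₊ < N
  · exact ⟨⟨⌊u⌋₊, h⟩, Nat.floor_le hu₀, (Nat.lt_floor_add_one u).le⟩
  · have hNu : (N : ℝ) ≤ u := le_trans (by exact_mod_cast not_lt.1 h) (Nat.floor_le hu₀)
    refine ⟨⟨N - 1, by omega⟩, ?_, ?_⟩ <;> simp [Nat.cast_sub hN] <;> linarith

lemma exists_interval_grid {N : ℕ} (hN : 0 < N) {r : ℝ} (hr : 0 < r) :
    ∃ c : Fin N → ℝ, (∀ n, |c n| ≤ r) ∧ ∀ t, |t| ≤ r → ∃ n, |t - c n| ≤ r / N := by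
  set s := r / N with hs
  have hs₀ : 0 < s := by positivity
  have hNs : N * s = r := by rw [hs]; field_simp
  refine ⟨fun n => -r + (2 * n + 1) * s, fun n => ?_, fun t ht => ?_⟩
  · have : (n : ℝ) + 1 ≤ N := by exact_mod_cast n.2
    rw [abs_le]
    constructor <;> nlinarith [Nat.cast_nonneg (α := ℝ) n]
  · obtain ⟨n, hn₀, hn₁⟩ := exists_fin_le_le_add_one hN (u := (t + r) / (2 * s))
      (by rw [abs_le] at ht; exact div_nonneg (by linarith) (by positivity))
      (by rw [div_le_iff₀ (by positivity)]; rw [abs_le] at ht; linarith)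
    refine ⟨n, ?_⟩
    rw [le_div_iff₀ (by positivity)] at hn₀
    rw [div_le_iff₀ (by positivity)] at hn₁
    rw [abs_le]
    constructor <;> linarith

lemma exists_cube_grid (d : ℕ) {N : ℕ} (hN : 0 < N) {r : ℝ} (hr : 0 < r) :
    ∃ p : Fin (N ^ d) → Euc d, (∀ m i, |p m i| ≤ r) ∧
      ∀ x : Euc d, (∀ i, |x i| ≤ r) → ∃ m, ∀ i, |x i - p m i| ≤ r / N := by
  obtain ⟨c, hc, hcover⟩ := exists_interval_grid hN hr
  refine ⟨fun m => WithLp.toLp 2 fun i => c (finFunctionFinEquiv.symm m i), fun m i => hc _,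
    fun x hx => ?_⟩
  choose n hn using fun i => hcover (x i) (hx i)
  exact ⟨finFunctionFinEquiv n, by simpa using hn⟩

lemma exists_nat_div_le {d : ℕ} (hd : 0 < d) {ε : ℝ} (hε₀ : 0 < ε) (hε₁ : ε ≤ 1) :
    ∃ N : ℕ, 0 < N ∧ (d : ℝ) / N ≤ ε ∧ (N : ℝ) ≤ 2 * d / ε := by
  have hdε : 1 ≤ d / ε := by
    rw [le_div_iff₀ hε₀]
    linarith [show (1 : ℝ) ≤ d by exact_mod_cast hd]
  have hceil := Nat.le_ceil (d / ε)
  refine ⟨⌈d / ε⌉₊, Nat.ceil_pos.2 (by linarith), ?_, ?_⟩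
  · rw [div_le_iff₀ (by linarith), ← div_le_iff₀' hε₀]
    exact hceil
  · linarith [Nat.ceil_lt_add_one (by linarith : 0 ≤ d / ε), mul_div_assoc (2 : ℝ) d ε]

lemma inv_pow_le_rpow_mul {b y ε : ℝ} (hb : 0 < b) (h : b ^ (-y) ≤ ε) (n : ℕ) :
    ε⁻¹ ^ n ≤ b ^ (y * n) := by
  have hε : 0 < ε := (Real.rpow_pos_of_pos hb _).trans_le h
  rw [Real.rpow_mul_natCast hb.le]
  gcongr
  calc ε⁻¹ ≤ (b ^ (-y))⁻¹ := inv_anti₀ (by positivity) h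
    _ = b ^ y := by rw [Real.rpow_neg hb.le, inv_inv]

lemma pow_mul_le_of_le_mul_sqrt {d k N : ℕ} (hk : (2 * d * (2 * d) ^ d) ^ 2 ≤ 2 * k)
    (hN : (N : ℝ) ^ d ≤ (2 * d) ^ d * √(2 * k)) : N ^ d * d ≤ k := by
  have ht : (2 * d * (2 * d) ^ d : ℝ) ≤ √(2 * k) :=
    Real.le_sqrt_of_sq_le (by exact_mod_cast hk)
  have hsq := Real.mul_self_sqrt (show (0 : ℝ) ≤ 2 * k by positivity)
  have : (N : ℝ) ^ d * d ≤ k :=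
    calc (N : ℝ) ^ d * d ≤ (2 * d) ^ d * √(2 * k) * d := by gcongr
      _ = (2 * d * (2 * d) ^ d) * √(2 * k) / 2 := by ring
      _ ≤ √(2 * k) * √(2 * k) / 2 := by
          have := mul_le_mul_of_nonneg_right ht (Real.sqrt_nonneg (2 * k))
          linarith
      _ = k := by rw [hsq]; ring
  exact_mod_cast this

lemma pow_le_two_pow_sub_two {d D N : ℕ} (hD : 2 * d ^ 2 + 4 ≤ D)
    (hN : (N : ℝ) ^ d ≤ (2 * d) ^ d * 2 ^ ((D : ℝ) / 2)) : N ^ d ≤ 2 ^ (D - 2) := by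
  have h2d : ((2 * d) ^ d : ℝ) ≤ 2 ^ ((d ^ 2 : ℕ) : ℝ) := by
    rw [Real.rpow_natCast, sq, pow_mul]
    exact_mod_cast Nat.pow_le_pow_left (Nat.mul_le_pow (by norm_num) d) d
  have : (N : ℝ) ^ d ≤ 2 ^ ((D - 2 : ℕ) : ℝ) :=
    calc (N : ℝ) ^ d ≤ 2 ^ ((d ^ 2 : ℕ) : ℝ) * 2 ^ ((D : ℝ) / 2) := hN.trans (by gcongr)
      _ = 2 ^ ((d ^ 2 : ℕ) + (D : ℝ) / 2) := (Real.rpow_add two_pos _ _).symm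
      _ ≤ 2 ^ ((D - 2 : ℕ) : ℝ) := by
        refine Real.rpow_le_rpow_of_exponent_le one_le_two ?_
        rw [Nat.cast_sub (by omega)]
        have : ((2 * d ^ 2 + 4 : ℕ) : ℝ) ≤ D := by exact_mod_cast hD
        push_cast at this ⊢
        linarith
  rw [Real.rpow_natCast] at this
  exact_mod_cast this

lemma inv_pow_le_sqrt {d : ℕ} (hd : 2 ≤ d) {w ε : ℝ} (hw : 1 ≤ w)
    (h : w ^ (-(1 : ℝ) / (d : ℝ) ^ 2) ≤ ε) : ε⁻¹ ^ d ≤ √w :=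
  calc ε⁻¹ ^ d ≤ w ^ (1 / (d : ℝ) ^ 2 * d) :=
        inv_pow_le_rpow_mul (by positivity) (by rwa [← neg_div]) d
    _ ≤ w ^ (1 / 2 : ℝ) := by
        refine Real.rpow_le_rpow_of_exponent_le hw ?_
        rw [show 1 / (d : ℝ) ^ 2 * d = 1 / d by field_simp]
        exact one_div_le_one_div_of_le two_pos (by exact_mod_cast hd)
    _ = √w := (Real.sqrt_eq_rpow w).symm

lemma inv_pow_le_two_rpow {d D : ℕ} (hd : 2 ≤ d) {ε : ℝ}
    (h : (2 : ℝ) ^ (-(D : ℝ) / (1 * (d : ℝ) ^ 2)) ≤ ε) : ε⁻¹ ^ d ≤ 2 ^ ((D : ℝ) / 2) :=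
  calc ε⁻¹ ^ d ≤ 2 ^ ((D : ℝ) / (1 * (d : ℝ) ^ 2) * d) :=
        inv_pow_le_rpow_mul two_pos (by rwa [← neg_div]) d
    _ ≤ 2 ^ ((D : ℝ) / 2) := by
        refine Real.rpow_le_rpow_of_exponent_le one_le_two ?_
        rw [show (D : ℝ) / (1 * (d : ℝ) ^ 2) * d = D / d by field_simp]
        exact div_le_div_of_nonneg_left (by positivity) two_pos (by exact_mod_cast hd)

lemma exists_grid_size {d k D : ℕ} (hd : 2 ≤ d) (hk : (2 * d * (2 * d) ^ d) ^ 2 ≤ 2 * k)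
    (hD : 2 * d ^ 2 + 4 ≤ D) :
    ∃ N : ℕ, 0 < N ∧ N ^ d * d ≤ k ∧ N ^ d ≤ 2 ^ (D - 2) ∧
      (d : ℝ) / N ≤ max ((2 : ℝ) ^ (-(D : ℝ) / (1 * (d : ℝ) ^ 2)))
        (((2 * k : ℕ) : ℝ) ^ (-(1 : ℝ) / (d : ℝ) ^ 2)) := by
  set w : ℝ := ((2 * k : ℕ) : ℝ) with hw_def
  set ε := max ((2 : ℝ) ^ (-(D : ℝ) / (1 * (d : ℝ) ^ 2))) (w ^ (-(1 : ℝ) / (d : ℝ) ^ 2))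
  have hw : 1 ≤ w := by
    have : 0 < (2 * d * (2 * d) ^ d) ^ 2 := by positivity
    rw [hw_def]
    exact_mod_cast this.trans_le hk
  have hε₀ : 0 < ε := lt_max_of_lt_left (by positivity)
  have hε₁ : ε ≤ 1 := by
    refine max_le (Real.rpow_le_one_of_one_le_of_nonpos one_le_two ?_)
      (Real.rpow_le_one_of_one_le_of_nonpos hw ?_) <;>
    exact div_nonpos_of_nonpos_of_nonneg (by simp) (by positivity)
  obtain ⟨N, hN, hNε, hN2⟩ := exists_nat_div_le (by omega : 0 < d) hε₀ hε₁
  have hNd : (N : ℝ) ^ d ≤ (2 * d) ^ d * ε⁻¹ ^ d := by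
    rw [← mul_pow]
    gcongr
    rwa [← div_eq_mul_inv]
  refine ⟨N, hN, pow_mul_le_of_le_mul_sqrt hk ?_, pow_le_two_pow_sub_two hD ?_, hNε⟩
  · have : ε⁻¹ ^ d ≤ √w := inv_pow_le_sqrt hd hw (le_max_right _ _)
    push_cast [hw_def] at this ⊢
    exact hNd.trans (by gcongr)
  · exact hNd.trans (by gcongr; exact inv_pow_le_two_rpow hd (le_max_left _ _))

/-- **GroupSort networks approximate Lipschitz functions on cubes**
(Lemma 3 of the paper, after Tanielian–Biau). -/
theorem groupSort_approximates_lipschitz :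
    ∃ C > (0 : ℝ), ∃ C' > (0 : ℝ),
      ∀ d : ℕ, 2 ≤ d →
      ∃ W₀ D₀ : ℕ,
      ∀ Mt : ℝ, 0 < Mt →
      ∀ f : Euc d → ℝ, LipschitzOnWith 1 f {x : Euc d | ∀ i, |x i| ≤ Mt} →
      ∀ (kf D : ℕ), W₀ ≤ 2 * kf → D₀ ≤ D →
      ∃ ft : Euc d → ℝ, IsGSNet d kf D ft ∧
        ∀ x : Euc d, (∀ i, |x i| ≤ Mt) →
          |f x - ft x| ≤ C' * Mt * Real.sqrt d *
            max ((2 : ℝ) ^ (-(D : ℝ) / (C * (d : ℝ) ^ 2)))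
              (((2 * kf : ℕ) : ℝ) ^ (-(1 : ℝ) / (d : ℝ) ^ 2)) := by
  refine ⟨1, one_pos, 2, two_pos, fun d hd => ⟨(2 * d * (2 * d) ^ d) ^ 2, 2 * d ^ 2 + 4,
    fun Mt hMt f hf kf D hW hD => ?_⟩⟩
  obtain ⟨N, hN, hwidth, hdepth, hNε⟩ := exists_grid_size hd hW hD
  have : NeZero N := ⟨hN.ne'⟩
  obtain ⟨p, hp, hcover⟩ := exists_cube_grid d hN hMt
  refine ⟨_, isGSNet_sup'_sub_sum_abs (by omega) hwidth hdepth (by omega) p (fun m => f (p m)),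
    fun x hx => ?_⟩
  have hδ : ∃ m, ∑ i, |x i - p m i| ≤ d * (Mt / N) := by
    obtain ⟨m, hm⟩ := hcover x hx
    exact ⟨m, by simpa using sum_le_sum fun i (_ : i ∈ univ) => hm i⟩
  have hsqrt : 1 ≤ √(d : ℝ) := Real.one_le_sqrt.2 (by exact_mod_cast (by omega : 1 ≤ d))
  calc _ ≤ 2 * (d * (Mt / N)) := abs_sub_sup'_le hf hp hx hδ
    _ = 2 * Mt * 1 * (d / N) := by ring
    _ ≤ _ := by gcongr

end
end

section
/- Let d ≥ 1, let W ≥ 2 be an even integer and D ≥ 1 an integer. Let f : ℝ^d → ℝ be a GroupSort network of width W and depth D (grouping size 2) whose weight matrices satisfy ‖V₁‖_{2,∞} ≤ 1 and ‖V_i‖_∞ ≤ 1 for all 2 ≤ i ≤ D. Then f is 1-Lipschitz with respect to the Euclidean norm on ℝ^d: |f(x) − f(y)| ≤ ‖x − y‖₂ for all x, y ∈ ℝ^d. -/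
open MeasureTheory
open scoped ENNReal NNReal BigOperators

noncomputable section

/-- The supremum (ℓ^∞) norm on ℝ^n. -/
noncomputable def supNorm {n : ℕ} (x : Euc n) : ℝ := ⨆ i, |x i|

/-- Hidden stack of a norm-constrained GroupSort network from ℝ^d, of width `2k`:
the first weight matrix satisfies `‖V₁‖_{2,∞} ≤ 1`, the others `‖V_i‖_∞ ≤ 1`. -/
inductive IsGSStackC (d k : ℕ) : ℕ → (Euc d → Euc (2 * k)) → Prop
  | base (V : Euc d →L[ℝ] Euc (2 * k)) (c : Euc (2 * k))
      (hV : ∀ (x : Euc d) (j : Fin (2 * k)), |V x j| ≤ ‖x‖) :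
      IsGSStackC d k 1 (fun x => gsAct (V x + c))
  | step (h : ℕ) (φ : Euc d → Euc (2 * k))
      (V : Euc (2 * k) →L[ℝ] Euc (2 * k)) (c : Euc (2 * k))
      (hV : ∀ (y : Euc (2 * k)) (j : Fin (2 * k)), |V y j| ≤ supNorm y)
      (hφ : IsGSStackC d k h φ) :
      IsGSStackC d k (h + 1) (fun x => gsAct (V (φ x) + c))

/-- `f` is a GroupSort network (grouping size 2) from ℝ^d to ℝ of width `2k` and depth
`D`, whose weight matrices satisfy `‖V₁‖_{2,∞} ≤ 1` and `‖V_i‖_∞ ≤ 1` for `i ≥ 2`. -/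
def IsGSNetC (d k : ℕ) (D : ℕ) (f : Euc d → ℝ) : Prop :=
  (D = 1 ∧ ∃ (V : Euc d →L[ℝ] ℝ) (c : ℝ), (∀ x : Euc d, |V x| ≤ ‖x‖) ∧
      f = fun x => V x + c) ∨
  (2 ≤ D ∧ ∃ φ : Euc d → Euc (2 * k), IsGSStackC d k (D - 1) φ ∧
      ∃ (V : Euc (2 * k) →L[ℝ] ℝ) (c : ℝ), (∀ y : Euc (2 * k), |V y| ≤ supNorm y) ∧
        f = fun x => V (φ x) + c)

/-! Each layer is 1-Lipschitz from the sup norm to the sup norm (the first one from the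
Euclidean norm), since the weight constraints say exactly this for the affine maps and
`max`, `min` are 1-Lipschitz in each pair of coordinates. Composing the layers gives the
bound. -/

section SupNorm

variable {n : ℕ}

lemma abs_le_supNorm (x : Euc n) (i : Fin n) : |x i| ≤ supNorm x :=
  le_ciSup (Set.finite_range fun i => |x i|).bddAbove i

lemma supNorm_nonneg (x : Euc n) : 0 ≤ supNorm x :=
  Real.iSup_nonneg fun _ => abs_nonneg _

lemma supNorm_le {x : Euc n} {c : ℝ} (h : ∀ i, |x i| ≤ c) (hc : 0 ≤ c) :
    supNorm x ≤ c :=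
  Real.iSup_le h hc

end SupNorm

lemma supNorm_gsAct_sub_le {k : ℕ} (x y : Euc (2 * k)) :
    supNorm (gsAct x - gsAct y) ≤ supNorm (x - y) := by
  have hcoord (a : Fin (2 * k)) : |x a - y a| ≤ supNorm (x - y) := by
    simpa using abs_le_supNorm (x - y) a
  refine supNorm_le (fun j => ?_) (supNorm_nonneg _)
  simp only [gsAct, PiLp.sub_apply]
  split
  · exact (abs_max_sub_max_le_max _ _ _ _).trans (max_le (hcoord _) (hcoord _))
  · exact (abs_min_sub_min_le_max _ _ _ _).trans (max_le (hcoord _) (hcoord _))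

lemma IsGSStackC.supNorm_sub_le {d k h : ℕ} {φ : Euc d → Euc (2 * k)}
    (hφ : IsGSStackC d k h φ) (x y : Euc d) : supNorm (φ x - φ y) ≤ ‖x - y‖ := by
  induction hφ with
  | base V c hV =>
    calc supNorm (gsAct (V x + c) - gsAct (V y + c))
        ≤ supNorm (V x + c - (V y + c)) := supNorm_gsAct_sub_le _ _
      _ = supNorm (V (x - y)) := by rw [add_sub_add_right_eq_sub, map_sub]
      _ ≤ ‖x - y‖ := supNorm_le (hV _) (norm_nonneg _)
  | step _ ψ V c hV _ ih =>
    calc supNorm (gsAct (V (ψ x) + c) - gsAct (V (ψ y) + c))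
        ≤ supNorm (V (ψ x) + c - (V (ψ y) + c)) := supNorm_gsAct_sub_le _ _
      _ = supNorm (V (ψ x - ψ y)) := by rw [add_sub_add_right_eq_sub, map_sub]
      _ ≤ supNorm (ψ x - ψ y) := supNorm_le (hV _) (supNorm_nonneg _)
      _ ≤ ‖x - y‖ := ih

theorem groupSortNet_one_lipschitz_general (d k D : ℕ)
    (f : Euc d → ℝ) (hf : IsGSNetC d k D f) :
    ∀ x y : Euc d, |f x - f y| ≤ ‖x - y‖ := by
  intro x y
  rcases hf with ⟨-, V, c, hV, rfl⟩ | ⟨-, φ, hφ, V, c, hV, rfl⟩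
  · calc |V x + c - (V y + c)| = |V (x - y)| := by rw [add_sub_add_right_eq_sub, map_sub]
      _ ≤ ‖x - y‖ := hV _
  · calc |V (φ x) + c - (V (φ y) + c)| = |V (φ x - φ y)| := by
          rw [add_sub_add_right_eq_sub, map_sub]
      _ ≤ supNorm (φ x - φ y) := hV _
      _ ≤ ‖x - y‖ := hφ.supNorm_sub_le x y

/-- **Norm-constrained GroupSort networks are 1-Lipschitz**
(Proposition 1 of the paper, after Tanielian–Biau). -/
theorem groupSortNet_one_lipschitz (d k D : ℕ) (hd : 1 ≤ d) (hk : 1 ≤ k) (hD : 1 ≤ D)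
    (f : Euc d → ℝ) (hf : IsGSNetC d k D f) :
    ∀ x y : Euc d, |f x - f y| ≤ ‖x - y‖ :=
  groupSortNet_one_lipschitz_general d k D f hf

end
end

section
/- Let r, d ≥ 1 and L ≥ 0. Let π and π̂ be Borel probability measures on ℝ^r with finite first moments, and let ν and ν̂ be Borel probability measures on ℝ^d with finite first moments. Let G be a nonempty set of L-Lipschitz functions from ℝ^r to ℝ^d, and suppose ĝ ∈ G satisfies W₁(ĝ#π̂, ν̂) ≤ W₁(g#π̂, ν̂) for every g ∈ G. Then W₁(ĝ#π, ν) ≤ sup_{g ∈ G} W₁(g#π, g#π̂) + inf_{g ∈ G} [ W₁(g#π, g#π̂) + W₁(g#π, ν) ] + 2 · W₁(ν, ν̂); moreover the supremum is finite (each term is at most L · W₁(π, π̂)). -/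
/-!
Two inputs drive the argument. Composing a test function with an `L`-Lipschitz generator gives
an `L`-Lipschitz test function, so `W₁(g#π, g#π̂) ≤ L · W₁(π, π̂)`. For any competitor `g ∈ G`, the
triangle inequality through `ĝ#π̂` and `ν̂`, the minimality of `ĝ` on the empirical problem, and the
triangle inequality back through `g#π` and `ν` give
`W₁(ĝ#π, ν) ≤ W₁(ĝ#π, ĝ#π̂) + W₁(g#π, g#π̂) + W₁(g#π, ν) + 2 W₁(ν, ν̂)`;
bounding the first term by the supremum and taking the infimum over `g` concludes.
-/

open MeasureTheory
open scoped ENNReal NNReal BigOperators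

noncomputable section

/-- Wasserstein-1 distance in Kantorovich–Rubinstein dual form. -/
noncomputable def W1 {k : ℕ} (μ ν : Measure (Euc k)) : ℝ :=
  sSup {t : ℝ | ∃ f : Euc k → ℝ, LipschitzWith 1 f ∧ t = (∫ x, f x ∂μ) - ∫ x, f x ∂ν}

section LipschitzMoments

variable {E F : Type*} [NormedAddCommGroup E] [NormedAddCommGroup F] {K : ℝ≥0}

lemma LipschitzWith.abs_sub_le {f : E → ℝ} (hf : LipschitzWith K f) (x : E) :
    |f x - f 0| ≤ K * ‖x‖ := by
  simpa [Real.dist_eq] using hf.dist_le_mul x 0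

variable [MeasurableSpace E] [OpensMeasurableSpace E] [MeasurableSpace F] [BorelSpace F]
  {μ : Measure E}

lemma LipschitzWith.integrable_of_integrable_norm [IsFiniteMeasure μ] {f : E → ℝ}
    (hf : LipschitzWith K f) (hμ : Integrable (fun x => ‖x‖) μ) : Integrable f μ := by
  refine ((hμ.const_mul K).add (integrable_const |f 0|)).mono'
    hf.continuous.aestronglyMeasurable (ae_of_all _ fun x => ?_)
  have := hf.abs_sub_le x
  rw [Real.norm_eq_abs, Pi.add_apply]
  linarith [abs_sub_abs_le_abs_sub (f x) (f 0)]

lemma LipschitzWith.integrable_norm_map [IsFiniteMeasure μ] {g : E → F}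
    (hg : LipschitzWith K g) (hμ : Integrable (fun x => ‖x‖) μ) :
    Integrable (fun y => ‖y‖) (μ.map g) :=
  (integrable_map_measure continuous_norm.aestronglyMeasurable hg.continuous.aemeasurable).2
    ((lipschitzWith_one_norm.comp hg).integrable_of_integrable_norm hμ)

lemma LipschitzWith.abs_integral_sub_le [IsProbabilityMeasure μ] {f : E → ℝ}
    (hf : LipschitzWith 1 f) (hμ : Integrable (fun x => ‖x‖) μ) :
    |∫ x, f x ∂μ - f 0| ≤ ∫ x, ‖x‖ ∂μ := by
  have hfi := hf.integrable_of_integrable_norm hμ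
  have hsub : ∫ x, f x ∂μ - f 0 = ∫ x, (f x - f 0) ∂μ := by
    rw [integral_sub hfi (integrable_const _), integral_const, probReal_univ, one_smul]
  rw [hsub, ← Real.norm_eq_abs]
  exact norm_integral_le_of_norm_le hμ
    (ae_of_all _ fun x => by simpa using hf.abs_sub_le x)

end LipschitzMoments

section W1

variable {k : ℕ} {μ ν ρ : Measure (Euc k)}

lemma W1_le_of_forall {c : ℝ}
    (h : ∀ f : Euc k → ℝ, LipschitzWith 1 f → ∫ x, f x ∂μ - ∫ x, f x ∂ν ≤ c) :
    W1 μ ν ≤ c :=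
  csSup_le ⟨0, fun _ => 0, LipschitzWith.const' 0, by simp⟩ fun _ ⟨f, hf, ht⟩ => ht ▸ h f hf

lemma W1_comm (μ ν : Measure (Euc k)) : W1 μ ν = W1 ν μ := by
  have swap : ∀ α β : Measure (Euc k), ∀ t : ℝ,
      (∃ f : Euc k → ℝ, LipschitzWith 1 f ∧ t = ∫ x, f x ∂α - ∫ x, f x ∂β) →
      ∃ f : Euc k → ℝ, LipschitzWith 1 f ∧ t = ∫ x, f x ∂β - ∫ x, f x ∂α := by
    rintro α β t ⟨f, hf, rfl⟩
    refine ⟨-f, LipschitzWith.of_dist_le_mul fun x y => ?_, ?_⟩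
    · simpa [dist_neg_neg] using hf.dist_le_mul x y
    · simp only [Pi.neg_apply, integral_neg]
      ring
  unfold W1
  congr 1
  ext t
  exact ⟨swap μ ν t, swap ν μ t⟩

variable [IsProbabilityMeasure μ] [IsProbabilityMeasure ν] [IsProbabilityMeasure ρ]

lemma integral_sub_integral_le_W1 (hμ : Integrable (fun x => ‖x‖) μ)
    (hν : Integrable (fun x => ‖x‖) ν) {f : Euc k → ℝ} (hf : LipschitzWith 1 f) :
    ∫ x, f x ∂μ - ∫ x, f x ∂ν ≤ W1 μ ν := by
  refine le_csSup ⟨∫ x, ‖x‖ ∂μ + ∫ x, ‖x‖ ∂ν, ?_⟩ ⟨f, hf, rfl⟩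
  rintro _ ⟨φ, hφ, rfl⟩
  have hμf := abs_le.1 (hφ.abs_integral_sub_le hμ)
  have hνf := abs_le.1 (hφ.abs_integral_sub_le hν)
  linarith [hμf.2, hνf.1]

lemma W1_triangle (hμ : Integrable (fun x => ‖x‖) μ) (hν : Integrable (fun x => ‖x‖) ν)
    (hρ : Integrable (fun x => ‖x‖) ρ) : W1 μ ρ ≤ W1 μ ν + W1 ν ρ :=
  W1_le_of_forall fun f hf => by
    linarith [integral_sub_integral_le_W1 hμ hν hf, integral_sub_integral_le_W1 hν hρ hf]

lemma LipschitzWith.integral_sub_integral_le_mul_W1 (hμ : Integrable (fun x => ‖x‖) μ)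
    (hν : Integrable (fun x => ‖x‖) ν) {K : ℝ≥0} {f : Euc k → ℝ} (hf : LipschitzWith K f) :
    ∫ x, f x ∂μ - ∫ x, f x ∂ν ≤ K * W1 μ ν := by
  rcases eq_or_ne K 0 with rfl | hK
  · have hconst : f = fun _ => f 0 := funext fun x => (LipschitzWith.zero_iff f).1 hf x 0
    rw [hconst]
    simp
  · have hscaled : LipschitzWith 1 fun x => (K : ℝ)⁻¹ * f x := by
      simpa [hK, Function.comp_def] using (lipschitzWith_smul (K : ℝ)⁻¹).comp hf
    have := integral_sub_integral_le_W1 hμ hν hscaled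
    rw [integral_const_mul, integral_const_mul, ← mul_sub,
      inv_mul_le_iff₀ (by positivity)] at this
    exact this

end W1

lemma W1_map_le {r d : ℕ} {μ ν : Measure (Euc r)} [IsProbabilityMeasure μ]
    [IsProbabilityMeasure ν] (hμ : Integrable (fun x => ‖x‖) μ)
    (hν : Integrable (fun x => ‖x‖) ν) {K : ℝ≥0} {g : Euc r → Euc d}
    (hg : LipschitzWith K g) : W1 (μ.map g) (ν.map g) ≤ K * W1 μ ν :=
  W1_le_of_forall fun f hf => by
    rw [integral_map hg.continuous.aemeasurable hf.continuous.aestronglyMeasurable,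
      integral_map hg.continuous.aemeasurable hf.continuous.aestronglyMeasurable]
    simpa using (hf.comp hg).integral_sub_integral_le_mul_W1 hμ hν

lemma W1_le_add_of_W1_le {k : ℕ} {α α' β β' ν ν' : Measure (Euc k)} [IsProbabilityMeasure α]
    [IsProbabilityMeasure α'] [IsProbabilityMeasure β] [IsProbabilityMeasure β']
    [IsProbabilityMeasure ν] [IsProbabilityMeasure ν']
    (hα : Integrable (fun x => ‖x‖) α) (hα' : Integrable (fun x => ‖x‖) α')
    (hβ : Integrable (fun x => ‖x‖) β) (hβ' : Integrable (fun x => ‖x‖) β')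
    (hν : Integrable (fun x => ‖x‖) ν) (hν' : Integrable (fun x => ‖x‖) ν')
    (hmin : W1 α' ν' ≤ W1 β' ν') :
    W1 α ν ≤ W1 α α' + (W1 β β' + W1 β ν) + 2 * W1 ν ν' := by
  have h₁ := W1_triangle hα hα' hν
  have h₂ := W1_triangle hα' hν' hν
  have h₃ := W1_triangle hβ' hβ hν'
  have h₄ := W1_triangle hβ hν hν'
  rw [W1_comm ν' ν] at h₂
  rw [W1_comm β' β] at h₃
  linarith

theorem wgan_oracle_inequality_nonparametric_general
    (r d : ℕ) (L : ℝ) (hL : 0 ≤ L)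
    (π πh : Measure (Euc r)) (ν νh : Measure (Euc d))
    [IsProbabilityMeasure π] [IsProbabilityMeasure πh]
    [IsProbabilityMeasure ν] [IsProbabilityMeasure νh]
    (hπ1 : Integrable (fun z : Euc r => ‖z‖) π)
    (hπh1 : Integrable (fun z : Euc r => ‖z‖) πh)
    (hν1 : Integrable (fun x : Euc d => ‖x‖) ν)
    (hνh1 : Integrable (fun x : Euc d => ‖x‖) νh)
    (G : Set (Euc r → Euc d)) (hGne : G.Nonempty)
    (hGLip : ∀ g ∈ G, ∀ x y : Euc r, ‖g x - g y‖ ≤ L * ‖x - y‖)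
    (gh : Euc r → Euc d) (hghG : gh ∈ G)
    (hmin : ∀ g ∈ G, W1 (Measure.map gh πh) νh ≤ W1 (Measure.map g πh) νh) :
    W1 (Measure.map gh π) ν ≤
        sSup {t : ℝ | ∃ g ∈ G, t = W1 (Measure.map g π) (Measure.map g πh)} +
        sInf {t : ℝ | ∃ g ∈ G,
          t = W1 (Measure.map g π) (Measure.map g πh) + W1 (Measure.map g π) ν} +
        2 * W1 ν νh ∧
      ∀ g ∈ G, W1 (Measure.map g π) (Measure.map g πh) ≤ L * W1 π πh := by
  have hlip : ∀ g ∈ G, LipschitzWith L.toNNReal g := fun g hg =>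
    LipschitzWith.of_dist_le' fun x y => by simpa [dist_eq_norm] using hGLip g hg x y
  have hbound : ∀ g ∈ G, W1 (π.map g) (πh.map g) ≤ L * W1 π πh := fun g hg => by
    simpa [Real.coe_toNNReal L hL] using W1_map_le hπ1 hπh1 (hlip g hg)
  refine ⟨?_, hbound⟩
  have hcompare : ∀ g ∈ G, W1 (π.map gh) ν ≤
      W1 (π.map gh) (πh.map gh) + (W1 (π.map g) (πh.map g) + W1 (π.map g) ν) + 2 * W1 ν νh := by
    intro g hg
    have := Measure.isProbabilityMeasure_map (μ := π) (hlip g hg).continuous.aemeasurable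
    have := Measure.isProbabilityMeasure_map (μ := πh) (hlip g hg).continuous.aemeasurable
    have := Measure.isProbabilityMeasure_map (μ := π) (hlip gh hghG).continuous.aemeasurable
    have := Measure.isProbabilityMeasure_map (μ := πh) (hlip gh hghG).continuous.aemeasurable
    exact W1_le_add_of_W1_le ((hlip gh hghG).integrable_norm_map hπ1)
      ((hlip gh hghG).integrable_norm_map hπh1) ((hlip g hg).integrable_norm_map hπ1)
      ((hlip g hg).integrable_norm_map hπh1) hν1 hνh1 (hmin g hg)
  have hsup : W1 (π.map gh) (πh.map gh) ≤
      sSup {t : ℝ | ∃ g ∈ G, t = W1 (Measure.map g π) (Measure.map g πh)} :=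
    le_csSup ⟨L * W1 π πh, by rintro _ ⟨g, hg, rfl⟩; exact hbound g hg⟩ ⟨gh, hghG, rfl⟩
  have hinf : W1 (π.map gh) ν - W1 (π.map gh) (πh.map gh) - 2 * W1 ν νh ≤
      sInf {t : ℝ | ∃ g ∈ G,
        t = W1 (Measure.map g π) (Measure.map g πh) + W1 (Measure.map g π) ν} :=
    le_csInf (hGne.elim fun g hg => ⟨_, g, hg, rfl⟩) fun _ ⟨g, hg, ht⟩ => by
      linarith [hcompare g hg]
  linarith

/-- **Pathwise oracle inequality for WGAN with nonparametric discriminators**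
(the inequality underlying Theorem 1 of the paper). -/
theorem wgan_oracle_inequality_nonparametric
    (r d : ℕ) (hr : 1 ≤ r) (hd : 1 ≤ d) (L : ℝ) (hL : 0 ≤ L)
    (π πh : Measure (Euc r)) (ν νh : Measure (Euc d))
    [IsProbabilityMeasure π] [IsProbabilityMeasure πh]
    [IsProbabilityMeasure ν] [IsProbabilityMeasure νh]
    (hπ1 : Integrable (fun z : Euc r => ‖z‖) π)
    (hπh1 : Integrable (fun z : Euc r => ‖z‖) πh)
    (hν1 : Integrable (fun x : Euc d => ‖x‖) ν)
    (hνh1 : Integrable (fun x : Euc d => ‖x‖) νh)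
    (G : Set (Euc r → Euc d)) (hGne : G.Nonempty)
    (hGLip : ∀ g ∈ G, ∀ x y : Euc r, ‖g x - g y‖ ≤ L * ‖x - y‖)
    (gh : Euc r → Euc d) (hghG : gh ∈ G)
    (hmin : ∀ g ∈ G, W1 (Measure.map gh πh) νh ≤ W1 (Measure.map g πh) νh) :
    W1 (Measure.map gh π) ν ≤
        sSup {t : ℝ | ∃ g ∈ G, t = W1 (Measure.map g π) (Measure.map g πh)} +
        sInf {t : ℝ | ∃ g ∈ G,
          t = W1 (Measure.map g π) (Measure.map g πh) + W1 (Measure.map g π) ν} +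
        2 * W1 ν νh ∧
      ∀ g ∈ G, W1 (Measure.map g π) (Measure.map g πh) ≤ L * W1 π πh :=
  wgan_oracle_inequality_nonparametric_general r d L hL π πh ν νh hπ1 hπh1 hν1 hνh1 G hGne hGLip gh
    hghG hmin

end
end

section
/- Let d ≥ 1, s > 1, M̃ ≥ 1, K ≥ 0 and ε ≥ 0. Let μ be a Borel probability measure on ℝ^d with ∫ ‖x‖₂^s dμ(x) ≤ K. Let f : ℝ^d → ℝ be 1-Lipschitz with f(0) = 0, and let f̃ : ℝ^d → ℝ be Borel measurable with |f̃(x)| ≤ ‖x‖₂ + 1 for all x. Suppose that |f(x) − f̃(x)| ≤ ε for all x with ‖x‖_∞ ≤ M̃. Then f and f̃ are μ-integrable and |∫ f dμ − ∫ f̃ dμ| ≤ ε + 3K · M̃^{1−s}. -/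
open MeasureTheory
open scoped ENNReal NNReal BigOperators

noncomputable section

lemma coord_le_norm {k : ℕ} (x : Euc k) (i : Fin k) : |x i| ≤ ‖x‖ := by
  rw [EuclideanSpace.norm_eq]
  have h1 : |x i| = Real.sqrt (‖x i‖ ^ 2) := by
    rw [Real.sqrt_sq_eq_abs]; simp [Real.norm_eq_abs, abs_abs]
  rw [h1]
  apply Real.sqrt_le_sqrt
  exact Finset.single_le_sum (fun j _ => sq_nonneg ‖x j‖) (Finset.mem_univ i)

/-- **Truncation estimate** used to bound the discriminator-approximation term `I₄`:
if `f̃` approximates the 1-Lipschitz function `f` (with `f(0)=0`) to accuracy `ε` on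
the cube `{‖x‖_∞ ≤ M̃}`, `|f̃(x)| ≤ ‖x‖+1`, and the `s`-th moment of `μ` is at most
`K`, then `|∫ f dμ − ∫ f̃ dμ| ≤ ε + 3K·M̃^{1−s}`. -/
theorem truncation_estimate (d : ℕ) (hd : 1 ≤ d) (s : ℝ) (hs : 1 < s)
    (Mt K ε : ℝ) (hMt : 1 ≤ Mt) (hK : 0 ≤ K) (hε : 0 ≤ ε)
    (μ : Measure (Euc d)) [IsProbabilityMeasure μ]
    (hmom : Integrable (fun x : Euc d => ‖x‖ ^ s) μ)
    (hmomK : (∫ x : Euc d, ‖x‖ ^ s ∂μ) ≤ K)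
    (f : Euc d → ℝ) (hf : LipschitzWith 1 f) (hf0 : f 0 = 0)
    (ft : Euc d → ℝ) (hftm : Measurable ft) (hftb : ∀ x : Euc d, |ft x| ≤ ‖x‖ + 1)
    (hclose : ∀ x : Euc d, (∀ i, |x i| ≤ Mt) → |f x - ft x| ≤ ε) :
    Integrable f μ ∧ Integrable ft μ ∧
      |(∫ x, f x ∂μ) - ∫ x, ft x ∂μ| ≤ ε + 3 * K * Mt ^ (1 - s) := by
  have hMt0 : (0:ℝ) < Mt := lt_of_lt_of_le one_pos hMt
  -- basic bound ‖x‖ ≤ 1 + ‖x‖^s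
  have hns : ∀ x : Euc d, ‖x‖ ≤ 1 + ‖x‖ ^ s := by
    intro x
    rcases le_or_gt ‖x‖ 1 with h | h
    · have : (0:ℝ) ≤ ‖x‖ ^ s := Real.rpow_nonneg (norm_nonneg _) _
      linarith
    · have h1 : ‖x‖ = ‖x‖ ^ (1:ℝ) := (Real.rpow_one _).symm
      have h2 : ‖x‖ ^ (1:ℝ) ≤ ‖x‖ ^ s :=
        Real.rpow_le_rpow_of_exponent_le h.le hs.le
      rw [Real.rpow_one] at h2
      linarith
  have hfb : ∀ x : Euc d, |f x| ≤ ‖x‖ := by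
    intro x
    have := hf.dist_le_mul x 0
    simpa [hf0, Real.dist_eq, dist_eq_norm] using this
  have hbound : Integrable (fun x : Euc d => 1 + ‖x‖ ^ s) μ :=
    (integrable_const 1).add hmom
  have hintf : Integrable f μ := by
    refine hbound.mono' (hf.continuous.aestronglyMeasurable) ?_
    filter_upwards with x
    calc ‖f x‖ = |f x| := rfl
    _ ≤ ‖x‖ := hfb x
    _ ≤ 1 + ‖x‖ ^ s := hns x
  have hintft : Integrable ft μ := by
    refine ((integrable_const 1).add hbound).mono' hftm.aestronglyMeasurable ?_
    filter_upwards with x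
    calc ‖ft x‖ = |ft x| := rfl
    _ ≤ ‖x‖ + 1 := hftb x
    _ ≤ 1 + (1 + ‖x‖ ^ s) := by linarith [hns x]
  refine ⟨hintf, hintft, ?_⟩
  -- pointwise bound
  have hpt : ∀ x : Euc d, |f x - ft x| ≤ ε + 3 * Mt ^ (1 - s) * ‖x‖ ^ s := by
    intro x
    by_cases hA : ∀ i, |x i| ≤ Mt
    · have := hclose x hA
      have h2 : (0:ℝ) ≤ 3 * Mt ^ (1 - s) * ‖x‖ ^ s :=
        mul_nonneg (mul_nonneg (by norm_num) (Real.rpow_nonneg hMt0.le _))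
          (Real.rpow_nonneg (norm_nonneg _) _)
      linarith
    · push_neg at hA
      obtain ⟨i, hi⟩ := hA
      have hxM : Mt < ‖x‖ := lt_of_lt_of_le hi (coord_le_norm x i)
      have hx1 : (1:ℝ) ≤ ‖x‖ := le_trans hMt hxM.le
      have hx0 : (0:ℝ) < ‖x‖ := lt_of_lt_of_le one_pos hx1
      have h3 : |f x - ft x| ≤ 3 * ‖x‖ := by
        calc |f x - ft x| ≤ |f x| + |ft x| := abs_sub _ _
        _ ≤ ‖x‖ + (‖x‖ + 1) := add_le_add (hfb x) (hftb x)
        _ ≤ 3 * ‖x‖ := by linarith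
      have key : ‖x‖ ≤ Mt ^ (1 - s) * ‖x‖ ^ s := by
        have h4 : ‖x‖ ^ ((1:ℝ) - s) ≤ Mt ^ (1 - s) :=
          Real.rpow_le_rpow_of_nonpos hMt0 hxM.le (by linarith)
        have h5 : ‖x‖ ^ ((1:ℝ) - s) * ‖x‖ ^ s = ‖x‖ := by
          rw [← Real.rpow_add hx0]; simp
        calc ‖x‖ = ‖x‖ ^ ((1:ℝ) - s) * ‖x‖ ^ s := h5.symm
        _ ≤ Mt ^ (1 - s) * ‖x‖ ^ s :=
          mul_le_mul_of_nonneg_right h4 (Real.rpow_nonneg hx0.le _)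
      linarith
  have hib : Integrable (fun x : Euc d => ε + 3 * Mt ^ (1 - s) * ‖x‖ ^ s) μ :=
    (integrable_const ε).add (hmom.const_mul _)
  calc |(∫ x, f x ∂μ) - ∫ x, ft x ∂μ|
      = |∫ x, (f x - ft x) ∂μ| := by rw [integral_sub hintf hintft]
    _ ≤ ∫ x, |f x - ft x| ∂μ := by simpa [Real.norm_eq_abs] using norm_integral_le_integral_norm (fun x => f x - ft x) (μ := μ)
    _ ≤ ∫ x, (ε + 3 * Mt ^ (1 - s) * ‖x‖ ^ s) ∂μ := by
        refine integral_mono ((hintf.sub hintft).abs) hib hpt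
    _ = ε + 3 * Mt ^ (1 - s) * ∫ x, ‖x‖ ^ s ∂μ := by
        rw [integral_add (integrable_const ε) (hmom.const_mul _),
          integral_const, integral_const_mul]
        simp
    _ ≤ ε + 3 * K * Mt ^ (1 - s) := by
        have h6 : (0:ℝ) ≤ Mt ^ (1 - s) := Real.rpow_nonneg hMt0.le _
        have : 3 * Mt ^ (1 - s) * ∫ x, ‖x‖ ^ s ∂μ ≤ 3 * Mt ^ (1 - s) * K :=
          mul_le_mul_of_nonneg_left hmomK (by positivity)
        linarith [this]

end
end
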